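/- Let c, m > 0 and write p⁰ = √((cm)² + |p|²) for p ∈ ℝ³. Let 0 < β_ℓ ≤ β_u, U_u ≥ 0, a_u > 0. For α ≥ 0, β > 0, U ∈ ℝ³ define J(α, β, U)(p) = (α/∫ e^{−cβ q⁰} dq/q⁰) · e^{−β(√(c²+|U|²)·p⁰ − ⟨U,p⟩)}. Then there exist constants C, C' > 0, depending only on c, m, β_ℓ, β_u, U_u, a_u, such that for all α₁, α₂ ∈ [0, a_u], all β₁, β₂ ∈ [β_ℓ, β_u], all U₁, U₂ ∈ ℝ³ with |U₁|, |U₂| ≤ U_u, and all p ∈ ℝ³: |J(α₁,β₁,U₁)(p) − J(α₂,β₂,U₂)(p)| ≤ C e^{−C' p⁰} (|α₁ − α₂| + |β₁ − β₂| + |U₁ − U₂|). -/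

import Mathlib

/-!
Write `J = (α / Z(cβ)) e^{-β W}` with `W = U⁰ p⁰ - ⟨U, p⟩`. The normalization `Z` is positive,
decreasing and Lipschitz in `β`, so on `[β_l, β_u]` the prefactor `α / Z(cβ)` is Lipschitz in
`(α, β)`. Since `U⁰ - |U| = c² / (U⁰ + |U|)`, the exponent satisfies `W ≥ δ p⁰` with
`δ = c² / (√(c² + U_u²) + U_u)`, while `βW` is Lipschitz in `(β, U)` with constant `O(p⁰)`.
The mean value bound `|e^{-x} - e^{-y}| ≤ e^{-min(x, y)} |x - y|` together with
`p⁰ e^{-a p⁰} ≤ (2 / a) e^{-a p⁰ / 2}` trades that factor `p⁰` for half of the decay.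
-/

open MeasureTheory Real Set

theorem abs_exp_neg_sub_exp_neg_le {t x y : ℝ} (hx : t ≤ x) (hy : t ≤ y) :
    |exp (-x) - exp (-y)| ≤ exp (-t) * |x - y| := by
  wlog hxy : x ≤ y generalizing x y
  · rw [abs_sub_comm, abs_sub_comm x]
    exact this hy hx (le_of_not_ge hxy)
  have hsplit : exp (-y) = exp (-x) * exp (x - y) := by rw [← exp_add]; ring_nf
  have hdecay : 1 - exp (x - y) ≤ y - x := by linarith [add_one_le_exp (x - y)]
  calc |exp (-x) - exp (-y)| = exp (-x) * (1 - exp (x - y)) := by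
        rw [abs_of_nonneg (sub_nonneg.2 (exp_le_exp.2 (neg_le_neg hxy))), hsplit]; ring
    _ ≤ exp (-t) * |x - y| := by
        rw [abs_sub_comm, abs_of_nonneg (by linarith)]
        gcongr
        linarith [exp_le_one_iff.2 (by linarith : x - y ≤ 0)]

theorem mul_exp_neg_mul_le {a t : ℝ} (ha : 0 < a) :
    t * exp (-(a * t)) ≤ 2 / a * exp (-(a / 2) * t) := by
  have hone : a / 2 * t * exp (-(a / 2) * t) ≤ 1 := by
    rw [neg_mul]
    exact (mul_exp_neg_le_exp_neg_one _).trans (exp_le_one_iff.2 (by norm_num))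
  calc t * exp (-(a * t)) = 2 / a * (a / 2 * t * exp (-(a / 2) * t)) * exp (-(a / 2) * t) := by
        have : exp (-(a * t)) = exp (-(a / 2) * t) * exp (-(a / 2) * t) := by
          rw [← exp_add]; ring_nf
        rw [this]; field_simp
    _ ≤ 2 / a * exp (-(a / 2) * t) := by
        grw [hone, mul_one]

theorem abs_div_sub_div_le {α₁ α₂ Z₁ Z₂ Zl au : ℝ} (hZl : 0 < Zl) (hZ₁ : Zl ≤ Z₁)
    (hZ₂ : Zl ≤ Z₂) (hα₂ : α₂ ∈ Icc 0 au) :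
    |α₁ / Z₁ - α₂ / Z₂| ≤ |α₁ - α₂| / Zl + au * |Z₁ - Z₂| / Zl ^ 2 := by
  have hZ₁p : 0 < Z₁ := hZl.trans_le hZ₁
  have hZ₂p : 0 < Z₂ := hZl.trans_le hZ₂
  have hsplit : α₁ / Z₁ - α₂ / Z₂ = (α₁ - α₂) / Z₁ + α₂ * (Z₂ - Z₁) / (Z₁ * Z₂) := by
    field_simp; ring
  rw [hsplit]
  refine (abs_add_le _ _).trans (add_le_add ?_ ?_)
  · rw [abs_div, abs_of_pos hZ₁p]
    gcongr
  · rw [abs_div, abs_mul, abs_of_nonneg hα₂.1, abs_of_pos (mul_pos hZ₁p hZ₂p), abs_sub_comm, sq]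
    have hau : 0 ≤ au := hα₂.1.trans hα₂.2
    gcongr
    exact hα₂.2

/-- The factor `P` in the variation of the exponents is absorbed by half of their decay. -/
theorem abs_mul_exp_neg_sub_mul_exp_neg_le {A₁ A₂ x₁ x₂ a P A ε₁ ε₂ : ℝ} (ha : 0 < a)
    (hP : 0 ≤ P) (hx₁ : a * P ≤ x₁) (hx₂ : a * P ≤ x₂) (hA : |A₂| ≤ A)
    (hA₁₂ : |A₁ - A₂| ≤ ε₁) (hx₁₂ : |x₁ - x₂| ≤ ε₂ * P) (hε₂ : 0 ≤ ε₂) :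
    |A₁ * exp (-x₁) - A₂ * exp (-x₂)| ≤ (ε₁ + A * ε₂ * (2 / a)) * exp (-(a / 2) * P) := by
  have hdecay : exp (-x₁) ≤ exp (-(a / 2) * P) := exp_le_exp.2 (by nlinarith)
  have hε₁ : 0 ≤ ε₁ := (abs_nonneg _).trans hA₁₂
  have hA0 : 0 ≤ A := (abs_nonneg _).trans hA
  calc |A₁ * exp (-x₁) - A₂ * exp (-x₂)|
      = |(A₁ - A₂) * exp (-x₁) + A₂ * (exp (-x₁) - exp (-x₂))| := by ring_nf
    _ ≤ ε₁ * exp (-(a / 2) * P) + A * (exp (-(a * P)) * (ε₂ * P)) := by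
        refine (abs_add_le _ _).trans (add_le_add ?_ ?_) <;> rw [abs_mul]
        · rw [abs_of_pos (exp_pos _)]
          gcongr
        · gcongr
          exact (abs_exp_neg_sub_exp_neg_le hx₁ hx₂).trans (by gcongr)
    _ = ε₁ * exp (-(a / 2) * P) + A * ε₂ * (P * exp (-(a * P))) := by ring
    _ ≤ ε₁ * exp (-(a / 2) * P) + A * ε₂ * (2 / a * exp (-(a / 2) * P)) := by
        grw [mul_exp_neg_mul_le ha]
    _ = (ε₁ + A * ε₂ * (2 / a)) * exp (-(a / 2) * P) := by ring

section Minkowski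

variable {E : Type*} [NormedAddCommGroup E]

noncomputable def onShellEnergy (k : ℝ) (p : E) : ℝ := √(k ^ 2 + ‖p‖ ^ 2)

theorem norm_le_onShellEnergy (k : ℝ) (p : E) : ‖p‖ ≤ onShellEnergy k p :=
  le_sqrt_of_sq_le (by nlinarith [sq_nonneg k])

theorem le_onShellEnergy (k : ℝ) (p : E) : k ≤ onShellEnergy k p :=
  le_sqrt_of_sq_le (by nlinarith [sq_nonneg ‖p‖])

theorem onShellEnergy_pos {k : ℝ} (hk : 0 < k) (p : E) : 0 < onShellEnergy k p :=
  hk.trans_le (le_onShellEnergy k p)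

theorem onShellEnergy_le {k Uu : ℝ} {U : E} (hU : ‖U‖ ≤ Uu) :
    onShellEnergy k U ≤ √(k ^ 2 + Uu ^ 2) := by
  unfold onShellEnergy
  gcongr

theorem abs_onShellEnergy_sub_le (k : ℝ) (U₁ U₂ : E) :
    |onShellEnergy k U₁ - onShellEnergy k U₂| ≤ ‖U₁ - U₂‖ := by
  suffices h : ∀ x y : ℝ, √(k ^ 2 + x ^ 2) ≤ √(k ^ 2 + y ^ 2) + |x - y| by
    refine (abs_sub_le_iff.2 ⟨?_, ?_⟩).trans (abs_norm_sub_norm_le U₁ U₂)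
    · exact sub_le_iff_le_add'.2 (h _ _)
    · exact sub_le_iff_le_add'.2 (abs_sub_comm ‖U₁‖ ‖U₂‖ ▸ h _ _)
  intro x y
  have hy : |y| ≤ √(k ^ 2 + y ^ 2) := abs_le_sqrt (by nlinarith [sq_nonneg k])
  have hy2 : √(k ^ 2 + y ^ 2) ^ 2 = k ^ 2 + y ^ 2 := sq_sqrt (by positivity)
  rw [sqrt_le_iff]
  refine ⟨by positivity, ?_⟩
  nlinarith [abs_mul_abs_self (x - y), abs_mul y (x - y), le_abs_self (y * (x - y)),
    abs_nonneg (x - y)]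

variable [InnerProductSpace ℝ E]

/-- `Ũ^μ p_μ` for the four-velocity `(√(c² + |U|²), U)` and the momentum `(p⁰, p)` on the mass
shell `p⁰ = √(k² + |p|²)`. -/
noncomputable def minkowskiPairing (c k : ℝ) (U p : E) : ℝ :=
  onShellEnergy c U * onShellEnergy k p - inner ℝ U p

theorem mul_onShellEnergy_le_minkowskiPairing {c k Uu : ℝ} (hc : 0 < c) {U : E} (hU : ‖U‖ ≤ Uu)
    (p : E) :
    c ^ 2 / (√(c ^ 2 + Uu ^ 2) + Uu) * onShellEnergy k p ≤ minkowskiPairing c k U p := by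
  have hS : onShellEnergy c U ^ 2 = c ^ 2 + ‖U‖ ^ 2 := sq_sqrt (by positivity)
  have hUS : ‖U‖ < onShellEnergy c U := lt_sqrt (norm_nonneg U) |>.2 (by nlinarith)
  have hSu := onShellEnergy_le (k := c) hU
  -- `(U⁰ - |U|) (U⁰ + |U|) = c²`
  have hgap : c ^ 2 / (√(c ^ 2 + Uu ^ 2) + Uu) ≤ onShellEnergy c U - ‖U‖ := by
    rw [div_le_iff₀ (by linarith [norm_nonneg U])]
    nlinarith [norm_nonneg U]
  have hinner : inner ℝ U p ≤ ‖U‖ * onShellEnergy k p :=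
    (real_inner_le_norm U p).trans (by gcongr; exact norm_le_onShellEnergy k p)
  unfold minkowskiPairing
  nlinarith [(norm_nonneg p).trans (norm_le_onShellEnergy k p)]

theorem mul_mul_onShellEnergy_le_mul_minkowskiPairing {c k Uu βl β : ℝ} (hc : 0 < c)
    (hβl : 0 ≤ βl) (hβ : βl ≤ β) {U : E} (hU : ‖U‖ ≤ Uu) (p : E) :
    βl * (c ^ 2 / (√(c ^ 2 + Uu ^ 2) + Uu)) * onShellEnergy k p ≤ β * minkowskiPairing c k U p := by
  have hP : 0 ≤ onShellEnergy k p := (norm_nonneg p).trans (norm_le_onShellEnergy k p)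
  have := (norm_nonneg U).trans hU
  rw [mul_assoc]
  exact mul_le_mul hβ (mul_onShellEnergy_le_minkowskiPairing hc hU p) (by positivity)
    (hβl.trans hβ)

theorem minkowskiPairing_le {c k Uu : ℝ} {U : E} (hU : ‖U‖ ≤ Uu) (p : E) :
    minkowskiPairing c k U p ≤ (√(c ^ 2 + Uu ^ 2) + Uu) * onShellEnergy k p := by
  have hp := norm_le_onShellEnergy k p
  have hinner : -(‖U‖ * onShellEnergy k p) ≤ inner ℝ U p :=
    (neg_le_neg (by gcongr)).trans (neg_le_of_abs_le (abs_real_inner_le_norm U p))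
  have hSu := onShellEnergy_le (k := c) hU
  unfold minkowskiPairing
  nlinarith [(norm_nonneg p).trans hp]

theorem abs_minkowskiPairing_sub_le (c k : ℝ) (U₁ U₂ p : E) :
    |minkowskiPairing c k U₁ p - minkowskiPairing c k U₂ p| ≤
      2 * ‖U₁ - U₂‖ * onShellEnergy k p := by
  have hp := norm_le_onShellEnergy k p
  have hP : 0 ≤ onShellEnergy k p := (norm_nonneg p).trans hp
  have hS := abs_onShellEnergy_sub_le c U₁ U₂
  have hinner : |inner ℝ (U₁ - U₂) p| ≤ ‖U₁ - U₂‖ * onShellEnergy k p :=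
    (abs_real_inner_le_norm _ _).trans (by gcongr)
  calc _ = |(onShellEnergy c U₁ - onShellEnergy c U₂) * onShellEnergy k p -
        inner ℝ (U₁ - U₂) p| := by
        rw [minkowskiPairing, minkowskiPairing, inner_sub_left]; ring_nf
    _ ≤ |onShellEnergy c U₁ - onShellEnergy c U₂| * onShellEnergy k p +
        |inner ℝ (U₁ - U₂) p| := by
        rw [← abs_of_nonneg hP, ← abs_mul, abs_of_nonneg hP]; exact abs_sub _ _
    _ ≤ 2 * ‖U₁ - U₂‖ * onShellEnergy k p := by nlinarith

theorem abs_mul_minkowskiPairing_sub_le {c k Uu βu β₁ β₂ : ℝ} (hc : 0 < c) {U₁ U₂ : E}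
    (hU₁ : ‖U₁‖ ≤ Uu) (hβ₂ : β₂ ∈ Icc 0 βu) (p : E) :
    |β₁ * minkowskiPairing c k U₁ p - β₂ * minkowskiPairing c k U₂ p| ≤
      (√(c ^ 2 + Uu ^ 2) + Uu + 2 * βu) * (|β₁ - β₂| + ‖U₁ - U₂‖) * onShellEnergy k p := by
  have hP : 0 ≤ onShellEnergy k p := (norm_nonneg p).trans (norm_le_onShellEnergy k p)
  have hW₁ : 0 ≤ minkowskiPairing c k U₁ p :=
    le_trans (by have := (norm_nonneg U₁).trans hU₁; positivity)
      (mul_onShellEnergy_le_minkowskiPairing hc hU₁ p)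
  have hW₁u := minkowskiPairing_le (c := c) (k := k) hU₁ p
  have hdW := abs_minkowskiPairing_sub_le c k U₁ U₂ p
  have hβu : 0 ≤ βu := hβ₂.1.trans hβ₂.2
  calc _ = |(β₁ - β₂) * minkowskiPairing c k U₁ p +
        β₂ * (minkowskiPairing c k U₁ p - minkowskiPairing c k U₂ p)| := by ring_nf
    _ ≤ |β₁ - β₂| * ((√(c ^ 2 + Uu ^ 2) + Uu) * onShellEnergy k p) +
        βu * (2 * ‖U₁ - U₂‖ * onShellEnergy k p) := by
        refine (abs_add_le _ _).trans (add_le_add ?_ ?_) <;> rw [abs_mul]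
        · rw [abs_of_nonneg hW₁]
          gcongr
        · rw [abs_of_nonneg hβ₂.1]
          gcongr
          exact hβ₂.2
    _ ≤ _ := by
        have := (norm_nonneg U₁).trans hU₁
        have : 0 ≤ √(c ^ 2 + Uu ^ 2) := sqrt_nonneg _
        nlinarith [abs_nonneg (β₁ - β₂), norm_nonneg (U₁ - U₂),
          mul_nonneg (mul_nonneg (abs_nonneg (β₁ - β₂)) hP) hβu,
          mul_nonneg (mul_nonneg (norm_nonneg (U₁ - U₂)) hP) this]

end Minkowski

section Normalization

variable {E : Type*} [NormedAddCommGroup E] [NormedSpace ℝ E] [FiniteDimensional ℝ E]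
  [MeasurableSpace E] [BorelSpace E] (μ : Measure E) [μ.IsAddHaarMeasure]

theorem integrable_exp_neg_mul_norm {a : ℝ} (ha : 0 < a) :
    Integrable (fun x : E => exp (-(a * ‖x‖))) μ := by
  set n := Module.finrank ℝ E + 1
  have hn : (Module.finrank ℝ E : ℝ) < (n : ℕ) := by simp [n]
  refine ((integrable_one_add_norm (μ := μ) hn).const_mul (exp a * n.factorial / a ^ n)).mono'
    (by fun_prop) (ae_of_all _ fun x => ?_)
  -- compare with the `n`-th Taylor term of `exp (a (1 + ‖x‖))`
  have htaylor := pow_div_factorial_le_exp (x := a * (1 + ‖x‖)) (by positivity) n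
  have hsplit : exp (-(a * ‖x‖)) = exp a / exp (a * (1 + ‖x‖)) := by
    rw [← exp_sub]; ring_nf
  rw [norm_of_nonneg (exp_pos _).le, hsplit, rpow_neg (by positivity), rpow_natCast,
    div_le_iff₀ (exp_pos _)]
  rw [div_le_iff₀ (by positivity), mul_pow] at htaylor
  field_simp
  rwa [mul_comm (1 + ‖x‖), mul_comm (n.factorial : ℝ)]

noncomputable def juttnerNormalization (k b : ℝ) : ℝ :=
  ∫ q, exp (-b * onShellEnergy k q) / onShellEnergy k q ∂μ

variable {μ} {k : ℝ}

theorem integrable_exp_neg_mul_onShellEnergy_div (hk : 0 < k) {b : ℝ} (hb : 0 < b) :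
    Integrable (fun q : E => exp (-b * onShellEnergy k q) / onShellEnergy k q) μ := by
  refine ((integrable_exp_neg_mul_norm μ hb).div_const k).mono'
    (Measurable.aestronglyMeasurable (by unfold onShellEnergy; fun_prop))
    (ae_of_all _ fun q => ?_)
  have hkP := le_onShellEnergy k q
  have hqP := norm_le_onShellEnergy k q
  rw [norm_of_nonneg (div_nonneg (exp_pos _).le (hk.le.trans hkP))]
  gcongr exp ?_ / ?_
  nlinarith

theorem juttnerNormalization_pos (hk : 0 < k) {b : ℝ} (hb : 0 < b) :
    0 < juttnerNormalization μ k b := by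
  have hpos : ∀ q : E, 0 < exp (-b * onShellEnergy k q) / onShellEnergy k q :=
    fun q => div_pos (exp_pos _) (onShellEnergy_pos hk q)
  refine (integral_pos_iff_support_of_nonneg (fun q => (hpos q).le)
    (integrable_exp_neg_mul_onShellEnergy_div hk hb)).2 ?_
  rw [Function.support_eq_univ fun q => (hpos q).ne']
  exact isOpen_univ.measure_pos μ univ_nonempty

theorem juttnerNormalization_anti (hk : 0 < k) {b b' : ℝ} (hb : 0 < b) (hbb' : b ≤ b') :
    juttnerNormalization μ k b' ≤ juttnerNormalization μ k b := by
  refine integral_mono (integrable_exp_neg_mul_onShellEnergy_div hk (hb.trans_le hbb'))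
    (integrable_exp_neg_mul_onShellEnergy_div hk hb) fun q => ?_
  have hP := onShellEnergy_pos hk q
  dsimp only
  gcongr

theorem abs_juttnerNormalization_sub_le (hk : 0 < k) {b₀ b₁ b₂ : ℝ} (hb₀ : 0 < b₀)
    (hb₁ : b₀ ≤ b₁) (hb₂ : b₀ ≤ b₂) :
    |juttnerNormalization μ k b₁ - juttnerNormalization μ k b₂| ≤
      (∫ q, exp (-(b₀ * ‖q‖)) ∂μ) * |b₁ - b₂| := by
  have hpoint : ∀ q : E, |exp (-b₁ * onShellEnergy k q) / onShellEnergy k q -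
      exp (-b₂ * onShellEnergy k q) / onShellEnergy k q| ≤ exp (-(b₀ * ‖q‖)) * |b₁ - b₂| := by
    intro q
    set P := onShellEnergy k q
    have hP : 0 < P := onShellEnergy_pos hk q
    have hqP : ‖q‖ ≤ P := norm_le_onShellEnergy k q
    rw [div_sub_div_same, abs_div, abs_of_pos hP, div_le_iff₀ hP, neg_mul, neg_mul]
    calc |exp (-(b₁ * P)) - exp (-(b₂ * P))| ≤ exp (-(b₀ * P)) * |b₁ * P - b₂ * P| :=
          abs_exp_neg_sub_exp_neg_le (by gcongr) (by gcongr)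
      _ ≤ exp (-(b₀ * ‖q‖)) * |b₁ - b₂| * P := by
          rw [← sub_mul, abs_mul, abs_of_pos hP, ← mul_assoc]
          gcongr
  rw [juttnerNormalization, juttnerNormalization,
    ← integral_sub (integrable_exp_neg_mul_onShellEnergy_div hk (hb₀.trans_le hb₁))
      (integrable_exp_neg_mul_onShellEnergy_div hk (hb₀.trans_le hb₂)), ← integral_mul_const]
  exact abs_integral_le_integral_abs.trans
    (integral_mono_of_nonneg (ae_of_all _ fun q => abs_nonneg _)
      ((integrable_exp_neg_mul_norm μ hb₀).mul_const _) (ae_of_all _ hpoint))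

theorem juttnerNormalization_le_of_mem_Icc (hk : 0 < k) {c βl βu β : ℝ} (hc : 0 < c)
    (hβl : 0 < βl) (hβ : β ∈ Icc βl βu) :
    juttnerNormalization μ k (c * βu) ≤ juttnerNormalization μ k (c * β) :=
  juttnerNormalization_anti hk (mul_pos hc (hβl.trans_le hβ.1)) (by gcongr; exact hβ.2)

theorem abs_div_juttnerNormalization_le (hk : 0 < k) {c βl βu au α β : ℝ} (hc : 0 < c)
    (hβl : 0 < βl) (hα : α ∈ Icc 0 au) (hβ : β ∈ Icc βl βu) :
    |α / juttnerNormalization μ k (c * β)| ≤ au / juttnerNormalization μ k (c * βu) := by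
  have hZu : 0 < juttnerNormalization μ k (c * βu) :=
    juttnerNormalization_pos hk (mul_pos hc (hβl.trans_le (hβ.1.trans hβ.2)))
  have hZ := juttnerNormalization_le_of_mem_Icc (μ := μ) hk hc hβl hβ
  rw [abs_of_nonneg (div_nonneg hα.1 (hZu.trans_le hZ).le)]
  exact div_le_div₀ (hα.1.trans hα.2) hα.2 hZu hZ

theorem abs_div_juttnerNormalization_sub_le (hk : 0 < k) {c βl βu au α₁ α₂ β₁ β₂ : ℝ}
    (hc : 0 < c) (hβl : 0 < βl) (hα₂ : α₂ ∈ Icc 0 au) (hβ₁ : β₁ ∈ Icc βl βu)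
    (hβ₂ : β₂ ∈ Icc βl βu) :
    |α₁ / juttnerNormalization μ k (c * β₁) - α₂ / juttnerNormalization μ k (c * β₂)| ≤
      (1 / juttnerNormalization μ k (c * βu) + au * (c * ∫ q, exp (-(c * βl * ‖q‖)) ∂μ) /
        juttnerNormalization μ k (c * βu) ^ 2) * (|α₁ - α₂| + |β₁ - β₂|) := by
  set Zu := juttnerNormalization μ k (c * βu)
  set M := ∫ q, exp (-(c * βl * ‖q‖)) ∂μ
  have hcβl : 0 < c * βl := mul_pos hc hβl
  have hZu : 0 < Zu :=
    juttnerNormalization_pos hk (hcβl.trans_le (by gcongr; exact hβ₁.1.trans hβ₁.2))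
  have hlip : |juttnerNormalization μ k (c * β₁) - juttnerNormalization μ k (c * β₂)| ≤
      c * M * |β₁ - β₂| := by
    refine (abs_juttnerNormalization_sub_le hk hcβl (by gcongr; exact hβ₁.1)
      (by gcongr; exact hβ₂.1)).trans_eq ?_
    rw [← mul_sub, abs_mul, abs_of_pos hc]; ring
  have hM : 0 ≤ M := integral_nonneg fun q => (exp_pos _).le
  have hau : 0 ≤ au := hα₂.1.trans hα₂.2
  calc _ ≤ |α₁ - α₂| / Zu + au * (c * M * |β₁ - β₂|) / Zu ^ 2 := by
        grw [abs_div_sub_div_le hZu (juttnerNormalization_le_of_mem_Icc hk hc hβl hβ₁)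
          (juttnerNormalization_le_of_mem_Icc hk hc hβl hβ₂) hα₂, hlip]
    _ = 1 / Zu * |α₁ - α₂| + au * (c * M) / Zu ^ 2 * |β₁ - β₂| := by ring
    _ ≤ _ := by
        have h₁ : 0 ≤ 1 / Zu := by positivity
        have h₂ : 0 ≤ au * (c * M) / Zu ^ 2 := by positivity
        nlinarith [mul_nonneg h₁ (abs_nonneg (β₁ - β₂)), mul_nonneg h₂ (abs_nonneg (α₁ - α₂))]

end Normalization

theorem stmt_18 (c m : ℝ) (hc : 0 < c) (hm : 0 < m)
    (βl βu : ℝ) (hβl : 0 < βl) (hβlu : βl ≤ βu)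
    (Uu au : ℝ) (hUu : 0 ≤ Uu) (hau : 0 < au)
    (J : ℝ → ℝ → EuclideanSpace ℝ (Fin 3) → EuclideanSpace ℝ (Fin 3) → ℝ)
    (hJ : ∀ (α β : ℝ) (U p : EuclideanSpace ℝ (Fin 3)),
      J α β U p = (α / ∫ q : EuclideanSpace ℝ (Fin 3),
          Real.exp (-(c * β) * Real.sqrt ((c * m) ^ 2 + ‖q‖ ^ 2)) /
            Real.sqrt ((c * m) ^ 2 + ‖q‖ ^ 2)) *
        Real.exp (-β * (Real.sqrt (c ^ 2 + ‖U‖ ^ 2) *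
          Real.sqrt ((c * m) ^ 2 + ‖p‖ ^ 2) - (inner ℝ U p : ℝ)))) :
    ∃ C > (0 : ℝ), ∃ C' > (0 : ℝ),
      ∀ α₁ ∈ Set.Icc (0 : ℝ) au, ∀ α₂ ∈ Set.Icc (0 : ℝ) au,
      ∀ β₁ ∈ Set.Icc βl βu, ∀ β₂ ∈ Set.Icc βl βu,
      ∀ U₁ U₂ : EuclideanSpace ℝ (Fin 3), ‖U₁‖ ≤ Uu → ‖U₂‖ ≤ Uu →
      ∀ p : EuclideanSpace ℝ (Fin 3),
        |J α₁ β₁ U₁ p - J α₂ β₂ U₂ p| ≤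
          C * Real.exp (-C' * Real.sqrt ((c * m) ^ 2 + ‖p‖ ^ 2)) *
            (|α₁ - α₂| + |β₁ - β₂| + ‖U₁ - U₂‖) := by
  have hk : 0 < c * m := mul_pos hc hm
  have hβu : 0 < βu := hβl.trans_le hβlu
  set Zu := juttnerNormalization (volume : Measure (EuclideanSpace ℝ (Fin 3))) (c * m) (c * βu)
  set M := ∫ q : EuclideanSpace ℝ (Fin 3), exp (-(c * βl * ‖q‖))
  set S₀ := √(c ^ 2 + Uu ^ 2)
  set δ := c ^ 2 / (S₀ + Uu)
  have hZu : 0 < Zu := juttnerNormalization_pos hk (mul_pos hc hβu)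
  have hM : 0 ≤ M := integral_nonneg fun _ => (exp_pos _).le
  have hδ : 0 < δ := by positivity
  refine ⟨1 / Zu + au * (c * M) / Zu ^ 2 + au / Zu * (S₀ + Uu + 2 * βu) * (2 / (βl * δ)),
    by positivity, βl * δ / 2, by positivity, ?_⟩
  intro α₁ hα₁ α₂ hα₂ β₁ hβ₁ β₂ hβ₂ U₁ U₂ hU₁ hU₂ p
  have hP0 : 0 ≤ onShellEnergy (c * m) p := (norm_nonneg p).trans (norm_le_onShellEnergy _ p)
  have hA₁₂ := abs_div_juttnerNormalization_sub_le (E := EuclideanSpace ℝ (Fin 3)) (μ := volume)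
    (α₁ := α₁) hk hc hβl hα₂ hβ₁ hβ₂
  have hx₁₂ := abs_mul_minkowskiPairing_sub_le (β₁ := β₁) (U₂ := U₂) (k := c * m) hc hU₁
    ⟨hβl.le.trans hβ₂.1, hβ₂.2⟩ p
  rw [hJ, hJ, neg_mul β₁, neg_mul β₂,
    show √((c * m) ^ 2 + ‖p‖ ^ 2) = onShellEnergy (c * m) p from rfl]
  refine (abs_mul_exp_neg_sub_mul_exp_neg_le
    (ε₁ := (1 / Zu + au * (c * M) / Zu ^ 2) * (|α₁ - α₂| + |β₁ - β₂| + ‖U₁ - U₂‖))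
    (ε₂ := (S₀ + Uu + 2 * βu) * (|α₁ - α₂| + |β₁ - β₂| + ‖U₁ - U₂‖)) (by positivity) hP0
    (mul_mul_onShellEnergy_le_mul_minkowskiPairing hc hβl.le hβ₁.1 hU₁ p)
    (mul_mul_onShellEnergy_le_mul_minkowskiPairing hc hβl.le hβ₂.1 hU₂ p)
    (abs_div_juttnerNormalization_le hk hc hβl hα₂ hβ₂) ?_ ?_ (by positivity)).trans_eq (by ring)
  · refine hA₁₂.trans ?_
    gcongr _ * ?_
    exact le_add_of_nonneg_right (norm_nonneg _)
  · refine hx₁₂.trans ?_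
    gcongr _ * ?_ * _
    linarith [abs_nonneg (α₁ - α₂)]
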